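/- Let S ⊆ Dic(A,y) with 1 ∉ S, S⁻¹ = S and ⟨S⟩ = Dic(A,y), written S = S₁ ∪ xS₂ with S₁, S₂ ⊆ A, and let D be a non-empty finite set of positive integers. Assume S₁ ∈ B(A) and S₂ ∈ B(A). Then there exist subsets S₁^D, S₂^D of A such that, setting S^D = S₁^D ∪ xS₂^D: 1 ∉ S^D, (S^D)⁻¹ = S^D, and the distance power Cay(Dic(A,y), S)^D equals Cay(Dic(A,y), S^D). Moreover Cay(Dic(A,y), S)^D is integral and (S₂^D)⁻¹ = S₂^D; and if 1 ∈ D, then Cay(Dic(A,y), S)^D is connected. -/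

import Mathlib

open scoped Classical Pointwise

/-- The generalized dicyclic group `Dic(A, y)` where `y : A` satisfies `y * y = 1`.
The element `⟨t, a⟩` represents `x^t * a`, where `x` is the extra generator with
`x ^ 2 = y` and `x * a * x⁻¹ = a⁻¹` for all `a ∈ A`. -/
@[ext]
structure Dic (A : Type*) [CommGroup A] (y : A) (hy : y * y = 1) where
  t : Bool
  a : A

namespace Dic

variable {A : Type*} [CommGroup A] {y : A} {hy : y * y = 1}

instance : Mul (Dic A y hy) :=
  ⟨fun g h => ⟨xor g.t h.t, (if h.t then g.a⁻¹ else g.a) * h.a * (if g.t && h.t then y else 1)⟩⟩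

instance : One (Dic A y hy) := ⟨⟨false, 1⟩⟩

instance : Inv (Dic A y hy) := ⟨fun g => ⟨g.t, if g.t then y * g.a else g.a⁻¹⟩⟩

@[simp] lemma mul_t (g h : Dic A y hy) : (g * h).t = xor g.t h.t := rfl
@[simp] lemma mul_a (g h : Dic A y hy) :
    (g * h).a = (if h.t then g.a⁻¹ else g.a) * h.a * (if g.t && h.t then y else 1) := rfl
@[simp] lemma one_t : (1 : Dic A y hy).t = false := rfl
@[simp] lemma one_a : (1 : Dic A y hy).a = 1 := rfl
@[simp] lemma inv_t (g : Dic A y hy) : g⁻¹.t = g.t := rfl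
@[simp] lemma inv_a (g : Dic A y hy) : g⁻¹.a = if g.t then y * g.a else g.a⁻¹ := rfl

instance : Group (Dic A y hy) where
  mul_assoc g₁ g₂ g₃ := by
    have hyi : y⁻¹ = y := inv_eq_of_mul_eq_one_right hy
    ext
    · cases g₁.t <;> cases g₂.t <;> cases g₃.t <;> simp
    · cases h₁ : g₁.t <;> cases h₂ : g₂.t <;> cases h₃ : g₃.t <;>
        simp [h₁, h₂, h₃, hyi, mul_inv_rev, mul_comm, mul_assoc, mul_left_comm]
  one_mul g := by ext <;> simp
  mul_one g := by ext <;> simp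
  inv_mul_cancel g := by
    ext
    · simp
    · cases h : g.t <;> simp [h, mul_inv_rev, mul_comm, mul_assoc, mul_left_comm]

/-- The canonical embedding of `A` into `Dic A y hy`. -/
def ofA (a : A) : Dic A y hy := ⟨false, a⟩

/-- The extra generator `x` of `Dic A y hy`, satisfying `x ^ 2 = y`. -/
def x (A : Type*) [CommGroup A] (y : A) (hy : y * y = 1) : Dic A y hy := ⟨true, 1⟩

instance [Fintype A] : Fintype (Dic A y hy) :=
  Fintype.ofEquiv (Bool × A)
    { toFun := fun p => ⟨p.1, p.2⟩
      invFun := fun g => (g.t, g.a)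
      left_inv := fun _ => rfl
      right_inv := fun _ => rfl }

end Dic

/-- The Cayley graph of a group `G` with respect to a connection set `S`.  When `1 ∉ S` and
`S⁻¹ = S`, two vertices `g h` are adjacent if and only if `g⁻¹ * h ∈ S`. -/
def cayley {G : Type*} [Group G] (S : Set G) : SimpleGraph G :=
  SimpleGraph.fromRel fun g h => g⁻¹ * h ∈ S

/-- A graph on a finite vertex set is integral if all eigenvalues of its adjacency matrix
are integers. -/
noncomputable def IsIntegralGraph {V : Type*} [Fintype V] (Γ : SimpleGraph V) : Prop :=
  ∀ μ ∈ spectrum ℝ (Γ.adjMatrix ℝ), ∃ k : ℤ, (k : ℝ) = μ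

/-- The distance matrix of a graph on a finite vertex set. -/
noncomputable def distMatrix {V : Type*} [Fintype V] (Γ : SimpleGraph V) : Matrix V V ℝ :=
  Matrix.of fun v w => (Γ.dist v w : ℝ)

/-- A (connected) graph on a finite vertex set is distance integral if all eigenvalues of its
distance matrix are integers. -/
noncomputable def IsDistanceIntegral {V : Type*} [Fintype V] (Γ : SimpleGraph V) : Prop :=
  ∀ μ ∈ spectrum ℝ (distMatrix Γ), ∃ k : ℤ, (k : ℝ) = μ

/-- The Boolean algebra `B(A)` of a group `A`: the collection of subsets of `A` generated by
the subgroups of `A` under finite intersections, unions, and complements. -/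
inductive InBoolAlg (A : Type*) [Group A] : Set A → Prop
  | subgroup (H : Subgroup A) : InBoolAlg A (H : Set A)
  | compl {s : Set A} : InBoolAlg A s → InBoolAlg A sᶜ
  | union {s t : Set A} : InBoolAlg A s → InBoolAlg A t → InBoolAlg A (s ∪ t)
  | inter {s t : Set A} : InBoolAlg A s → InBoolAlg A t → InBoolAlg A (s ∩ t)

/-- `mulPow S n = S^(n)`, the set of products of `n` elements of `S` (`S^(0) = {1}`). -/
def mulPow {G : Type*} [Monoid G] (S : Set G) (n : ℕ) : Set G :=
  {g | ∃ l : List G, l.length = n ∧ (∀ u ∈ l, u ∈ S) ∧ l.prod = g}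

/-- `wordLen S g = ℓ_S(g)`: `0` if `g = 1`, and otherwise the least `n ≥ 1` such that `g` is a
product of `n` elements of `S`. -/
noncomputable def wordLen {G : Type*} [Group G] (S : Set G) (g : G) : ℕ :=
  if g = 1 then 0 else sInf {n : ℕ | g ∈ mulPow S n}

/-- The distance power `Γ^D`: two distinct vertices are adjacent iff their distance in `Γ`
belongs to `D`. -/
def distPower {V : Type*} (Γ : SimpleGraph V) (D : Finset ℕ) : SimpleGraph V where
  Adj v w := v ≠ w ∧ Γ.dist v w ∈ D
  symm := ⟨fun v w h => ⟨h.1.symm, by rw [SimpleGraph.dist_comm]; exact h.2⟩⟩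
  loopless := ⟨fun v h => h.1 rfl⟩

/-- A multiset `(A, f)` lies in `C(A)` iff `f` is constant on each atom
`[a] = {b : ⟨b⟩ = ⟨a⟩}`. -/
def InCA {A : Type*} [Group A] (f : A → ℕ) : Prop :=
  ∀ a b : A, Subgroup.zpowers a = Subgroup.zpowers b → f a = f b

/-- The two-dimensional representation `R_π` of `Dic A y hy` induced by a one-dimensional
representation `π` of `A`:  `R_π(x) = [[0, π y], [1, 0]]` and `R_π(a) = diag(π a, π a⁻¹)`. -/
noncomputable def Rpi {A : Type*} [CommGroup A] {y : A} {hy : y * y = 1}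
    (π : A →* ℂ) (g : Dic A y hy) : Matrix (Fin 2) (Fin 2) ℂ :=
  (if g.t then !![0, π y; 1, 0] else 1) * !![π g.a, 0; 0, π g.a⁻¹]

/-- The complex-conjugate of a one-dimensional representation. -/
def conjHom {A : Type*} [CommGroup A] (π : A →* ℂ) : A →* ℂ :=
  (starRingEnd ℂ).toMonoidHom.comp π

/-!
The distance power of a Cayley graph is again a Cayley graph: left translations are graph
automorphisms, so `Cay(G, S)^D = Cay(G, S^D)` with `S^D = {g | d(1, g) ∈ D}`. For `k` coprime
to `|A|`, the map `x^t a ↦ x^t a^k` is an automorphism of `Dic(A, y)`. It preserves `S`, because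
every set in `B(A)` is a union of atoms `[a] = {b | ⟨b⟩ = ⟨a⟩}`, and it fixes `1`, so it also
preserves `S^D`. Any two generators of a cyclic subgroup differ by such a power, so `S₁^D` and
`S₂^D` are unions of atoms.

For such a connection set, every character `π` of `A` and sign `ε = ±1` give an eigenvector
`a ↦ π(a)`, `xa ↦ ε π(a)⁻¹` of the adjacency matrix, with eigenvalue `∑_{S₁^D} π + ε ∑_{S₂^D} π`.
These `2|A|` vectors span, and the character sums over unions of atoms are integers: over a
subgroup they are `0` or its order, and induction over the cyclic subgroups does the rest.
-/

namespace SimpleGraph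

variable {V W : Type*} {Γ : SimpleGraph V} {Γ' : SimpleGraph W}

lemma Iso.dist_le (φ : Γ ≃g Γ') (u v : V) : Γ'.dist (φ u) (φ v) ≤ Γ.dist u v := by
  by_cases hr : Γ.Reachable u v
  · obtain ⟨p, hp⟩ := hr.exists_walk_length_eq_dist
    simpa [hp] using SimpleGraph.dist_le (p.map φ.toHom)
  · have hr' : ¬Γ'.Reachable (φ u) (φ v) := fun h => hr (by simpa using h.map φ.symm.toHom)
    rw [dist_eq_zero_of_not_reachable hr', dist_eq_zero_of_not_reachable hr]

lemma Iso.dist_eq (φ : Γ ≃g Γ') (u v : V) : Γ'.dist (φ u) (φ v) = Γ.dist u v :=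
  (φ.dist_le u v).antisymm (by simpa using φ.symm.dist_le (φ u) (φ v))

def Iso.distPower (φ : Γ ≃g Γ') (D : Finset ℕ) : _root_.distPower Γ D ≃g _root_.distPower Γ' D where
  toEquiv := φ.toEquiv
  map_rel_iff' {u v} := by
    change φ u ≠ φ v ∧ Γ'.dist (φ u) (φ v) ∈ D ↔ u ≠ v ∧ Γ.dist u v ∈ D
    rw [φ.injective.ne_iff, φ.dist_eq]

@[simp] lemma Iso.coe_distPower (φ : Γ ≃g Γ') (D : Finset ℕ) : ⇑(φ.distPower D) = φ := rfl

lemma le_distPower {D : Finset ℕ} (hD : 1 ∈ D) : Γ ≤ _root_.distPower Γ D :=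
  fun _ _ hadj => ⟨hadj.ne, (dist_eq_one_iff_adj.mpr hadj).symm ▸ hD⟩

end SimpleGraph

section Cayley

open SimpleGraph

variable {G : Type*} [Group G] {T : Set G}

lemma cayley_adj_iff {g h : G} : (cayley T).Adj g h ↔ g ≠ h ∧ (g⁻¹ * h ∈ T ∨ h⁻¹ * g ∈ T) := by
  simp [cayley]

lemma cayley_adj_iff_of_inv_eq (h1 : (1 : G) ∉ T) (hT : T⁻¹ = T) {g h : G} :
    (cayley T).Adj g h ↔ g⁻¹ * h ∈ T := by
  rw [cayley_adj_iff, ← Set.inv_mem_inv, hT, mul_inv_rev, inv_inv, or_self,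
    and_iff_right_of_imp]
  rintro hgh rfl
  exact h1 (by simpa using hgh)

def cayleyMulLeft (T : Set G) (k : G) : cayley T ≃g cayley T where
  toEquiv := Equiv.mulLeft k
  map_rel_iff' := by simp [cayley_adj_iff, mul_assoc]

@[simp] lemma cayleyMulLeft_apply (T : Set G) (k g : G) : cayleyMulLeft T k g = k * g := rfl

def cayleyMulEquiv (σ : G ≃* G) (hσ : ∀ g, σ g ∈ T ↔ g ∈ T) : cayley T ≃g cayley T where
  toEquiv := σ.toEquiv
  map_rel_iff' := by simp [cayley_adj_iff, ← map_inv, ← map_mul, hσ]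

@[simp] lemma cayleyMulEquiv_apply (σ : G ≃* G) (hσ : ∀ g, σ g ∈ T ↔ g ∈ T) (g : G) :
    cayleyMulEquiv σ hσ g = σ g := rfl

lemma cayley_connected (hT : Subgroup.closure T = ⊤) : (cayley T).Connected := by
  refine (connected_iff_exists_forall_reachable _).mpr ⟨1, fun g => ?_⟩
  have hg : g ∈ Subgroup.closure T := hT ▸ Subgroup.mem_top g
  induction hg using Subgroup.closure_induction with
  | mem s hs =>
    obtain rfl | h1 := eq_or_ne s 1
    · exact Reachable.rfl
    · exact (cayley_adj_iff.mpr ⟨Ne.symm h1, Or.inl (by simpa using hs)⟩).reachable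
  | one => exact Reachable.rfl
  | mul a b _ _ ha hb => exact ha.trans (by simpa using hb.map (cayleyMulLeft T a).toHom)
  | inv a _ ha => simpa using (ha.map (cayleyMulLeft T a⁻¹).toHom).symm

lemma cayley_setOf_adj_one {Γ : SimpleGraph G} (hΓ : ∀ k g h, Γ.Adj (k * g) (k * h) ↔ Γ.Adj g h) :
    cayley {g | Γ.Adj 1 g} = Γ := by
  ext g h
  have hgh : Γ.Adj 1 (g⁻¹ * h) ↔ Γ.Adj g h := by simpa using (hΓ g 1 (g⁻¹ * h)).symm
  have hhg : Γ.Adj 1 (h⁻¹ * g) ↔ Γ.Adj h g := by simpa using (hΓ h 1 (h⁻¹ * g)).symm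
  simp only [cayley_adj_iff, Set.mem_ofPred_eq, hgh, hhg, Γ.adj_comm h g, or_self]
  exact and_iff_right_of_imp Adj.ne

lemma inv_setOf_adj_one {Γ : SimpleGraph G} (hΓ : ∀ k g h, Γ.Adj (k * g) (k * h) ↔ Γ.Adj g h) :
    {g | Γ.Adj 1 g}⁻¹ = {g | Γ.Adj 1 g} := by
  ext g
  simpa [Γ.adj_comm] using (hΓ g 1 g⁻¹).symm

open Matrix in
lemma cayley_adjMatrix_mulVec_apply {G R : Type*} [Group G] [Fintype G] [NonAssocSemiring R]
    {T : Set G} (h1 : (1 : G) ∉ T) (hT : T⁻¹ = T) (f : G → R) (g : G) :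
    ((cayley T).adjMatrix R *ᵥ f) g = ∑ s ∈ T.toFinset, f (g * s) := by
  rw [SimpleGraph.adjMatrix_mulVec_apply]
  exact Finset.sum_equiv (Equiv.mulLeft g⁻¹)
    (by simp [cayley_adj_iff_of_inv_eq h1 hT]) (by simp)

end Cayley

section Saturated

open Subgroup

variable {G : Type*} [Group G]

/-- `T` is a union of atoms `[a] = {b | ⟨b⟩ = ⟨a⟩}`. -/
def ZPowersSaturated (T : Set G) : Prop :=
  ∀ ⦃a b : G⦄, zpowers a = zpowers b → a ∈ T → b ∈ T

lemma InBoolAlg.zpowersSaturated {T : Set G} (hT : InBoolAlg G T) : ZPowersSaturated T := by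
  induction hT with
  | subgroup H => exact fun a b hab ha => zpowers_le.mpr ha (hab ▸ mem_zpowers b)
  | compl _ ih => exact fun a b hab ha hb => ha (ih hab.symm hb)
  | union _ _ ih₁ ih₂ => exact fun a b hab => Or.imp (ih₁ hab) (ih₂ hab)
  | inter _ _ ih₁ ih₂ => exact fun a b hab => And.imp (ih₁ hab) (ih₂ hab)

lemma ZPowersSaturated.inv_mem_iff {T : Set G} (hT : ZPowersSaturated T) {a : G} :
    a⁻¹ ∈ T ↔ a ∈ T :=
  ⟨hT (by simp), hT (by simp)⟩

lemma zpowers_pow_eq_of_coprime (a : G) {k : ℕ} (hk : (Nat.card G).Coprime k) :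
    zpowers (a ^ k) = zpowers a :=
  le_antisymm (zpowers_le.mpr (pow_mem (mem_zpowers a) k)) <| zpowers_le.mpr <|
    mem_zpowers_pow_iff.mpr (hk.coprime_dvd_left (orderOf_dvd_natCard a)).symm

lemma ZPowersSaturated.pow_mem_iff {T : Set G} (hT : ZPowersSaturated T) {k : ℕ}
    (hk : (Nat.card G).Coprime k) {a : G} : a ^ k ∈ T ↔ a ∈ T :=
  ⟨hT (zpowers_pow_eq_of_coprime a hk), hT (zpowers_pow_eq_of_coprime a hk).symm⟩

lemma pow_eq_self_of_coprime {y : G} (hy : y * y = 1) {k : ℕ}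
    (hk : (Nat.card G).Coprime k) : y ^ k = y := by
  have hdvd : orderOf y ∣ 2 := orderOf_dvd_of_pow_eq_one (by rw [sq, hy])
  have hcop : (orderOf y).Coprime k := hk.coprime_dvd_left (orderOf_dvd_natCard y)
  conv_rhs => rw [← pow_one y]
  rw [pow_eq_pow_iff_modEq]
  rcases (Nat.dvd_prime Nat.prime_two).mp hdvd with h | h <;> rw [h] at hcop ⊢
  · exact Nat.modEq_one
  · exact Nat.odd_iff.mp (Nat.coprime_two_left.mp hcop)

lemma exists_coprime_pow_eq_of_zpowers_eq [Finite G] {a b : G} (hab : zpowers a = zpowers b) :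
    ∃ k, (Nat.card G).Coprime k ∧ a ^ k = b := by
  obtain ⟨j, rfl⟩ : ∃ j : ℕ, a ^ j = b :=
    (mem_powers_iff_mem_zpowers.mpr (hab ▸ mem_zpowers b) :)
  have hj : j.Coprime (orderOf a) := mem_zpowers_pow_iff.mp (hab ▸ mem_zpowers a)
  -- lift the exponent from `(ZMod (orderOf a))ˣ` to `(ZMod (Nat.card G))ˣ`
  obtain ⟨u, hu⟩ := ZMod.unitsMap_surjective (orderOf_dvd_natCard a) (ZMod.unitOfCoprime j hj)
  refine ⟨(u : ZMod (Nat.card G)).val, (ZMod.val_coe_unit_coprime u).symm, ?_⟩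
  rw [pow_eq_pow_iff_modEq, ← ZMod.natCast_eq_natCast_iff, ZMod.natCast_val,
    ← ZMod.coe_unitOfCoprime j hj, ← hu]
  rfl

end Saturated

section CharacterSums

open Subgroup Finset

variable {G : Type*} [Group G] [Fintype G]

lemma sum_subgroup_monoidHom_mem_range (π : G →* ℂ) (H : Subgroup G) :
    ∑ b ∈ (H : Set G).toFinset, π b ∈ (Int.castRingHom ℂ).range := by
  rw [show ∑ b ∈ (H : Set G).toFinset, π b = ∑ b : H, π b from sum_subtype _ (by simp) _]
  by_cases hπ : π.comp H.subtype = 1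
  · have hπ' : ∀ b : H, π b = 1 := fun b => DFunLike.congr_fun hπ b
    simp only [hπ', sum_const, card_univ, nsmul_eq_mul, mul_one]
    exact ⟨Fintype.card H, by simp⟩
  · rw [show ∑ b : H, π b = 0 from sum_hom_units_eq_zero _ hπ]
    exact zero_mem _

noncomputable def cyclicGenerators (H : Subgroup G) : Finset G := {b | zpowers b = H}

lemma ZPowersSaturated.sum_eq_sum_cyclicGenerators {M : Type*} [AddCommMonoid M] {T : Set G}
    (hT : ZPowersSaturated T) (f : G → M) :
    ∑ b ∈ T.toFinset, f b = ∑ H ∈ T.toFinset.image zpowers, ∑ b ∈ cyclicGenerators H, f b := by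
  rw [← sum_fiberwise_of_maps_to (g := zpowers) fun b hb => mem_image_of_mem _ hb]
  refine sum_congr rfl fun H hH => sum_congr ?_ fun _ _ => rfl
  obtain ⟨a, ha, rfl⟩ := mem_image.mp hH
  ext b
  simp only [cyclicGenerators, mem_filter, Set.mem_toFinset, mem_univ, true_and,
    and_iff_right_iff_imp]
  exact fun hb => hT hb.symm (Set.mem_toFinset.mp ha)

lemma sum_cyclicGenerators_mem_range (π : G →* ℂ) (H : Subgroup G) :
    ∑ b ∈ cyclicGenerators H, π b ∈ (Int.castRingHom ℂ).range := by
  induction H using WellFoundedLT.induction with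
  | _ H ih =>
  obtain ⟨a, rfl⟩ | hcyc := em (∃ a, zpowers a = H)
  · have hsplit :=
      (InBoolAlg.subgroup (zpowers a)).zpowersSaturated.sum_eq_sum_cyclicGenerators π
    rw [← add_sum_erase _ _ (mem_image_of_mem zpowers (by simp : a ∈ _))] at hsplit
    rw [eq_sub_of_add_eq hsplit.symm]
    refine sub_mem (sum_subgroup_monoidHom_mem_range π _) (sum_mem fun K hK => ih K ?_)
    obtain ⟨hne, hK⟩ := mem_erase.mp hK
    obtain ⟨b, hb, rfl⟩ := mem_image.mp hK
    exact lt_of_le_of_ne (zpowers_le.mpr (by simpa using hb)) hne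
  · rw [show cyclicGenerators H = ∅ by simpa [cyclicGenerators, eq_empty_iff_forall_notMem]
      using hcyc, sum_empty]
    exact zero_mem _

lemma ZPowersSaturated.sum_monoidHom_mem_range {T : Set G} (hT : ZPowersSaturated T)
    (π : G →* ℂ) : ∑ b ∈ T.toFinset, π b ∈ (Int.castRingHom ℂ).range := by
  rw [hT.sum_eq_sum_cyclicGenerators]
  exact sum_mem fun H _ => sum_cyclicGenerators_mem_range π H

end CharacterSums

lemma eq_zero_of_forall_dotProduct_monoidHom_eq_zero {A : Type*} [CommGroup A] [Fintype A]
    {u : A → ℂ} (hu : ∀ π : A →* ℂ, u ⬝ᵥ ⇑π = 0) : u = 0 := by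
  have : Finite (A →* ℂ) := .of_equiv _ MonoidHom.toHomUnitsMulEquiv.symm.toEquiv
  have : Fintype (A →* ℂ) := Fintype.ofFinite _
  have hspan : Submodule.span ℂ (Set.range fun π : A →* ℂ => ⇑π) = ⊤ := by
    refine (linearIndependent_monoidHom A ℂ).span_eq_top_of_card_eq_finrank' ?_
    rw [Module.finrank_fintype_fun_eq_card, ← Nat.card_eq_fintype_card,
      ← Nat.card_eq_fintype_card, Nat.card_congr MonoidHom.toHomUnitsMulEquiv.toEquiv,
      CommGroup.card_monoidHom_of_hasEnoughRootsOfUnity]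
  refine dotProduct_eq_zero u fun w => ?_
  exact LinearMap.congr_fun (LinearMap.ext_on_range hspan (f := dotProductBilin ℂ ℂ u)
    (g := 0) hu) w

section Spectrum

open Matrix

variable {n : Type*} [Fintype n]

lemma Matrix.exists_eigenvalue_eq_of_symm {K ι : Type*} [Field K] {M : Matrix n n K}
    (hM : Mᵀ = M) {v : ι → n → K} {θ : ι → K} (hv : ∀ i, M *ᵥ v i = θ i • v i)
    (hspan : ∀ u, (∀ i, u ⬝ᵥ v i = 0) → u = 0) {μ : K} {u : n → K} (hu0 : u ≠ 0)
    (hu : M *ᵥ u = μ • u) : ∃ i, θ i = μ := by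
  by_contra! hne
  refine hu0 (hspan u fun i => ?_)
  have h : θ i * (u ⬝ᵥ v i) = μ * (u ⬝ᵥ v i) :=
    calc θ i * (u ⬝ᵥ v i) = u ⬝ᵥ (M *ᵥ v i) := by rw [hv i, dotProduct_smul, smul_eq_mul]
      _ = (M *ᵥ u) ⬝ᵥ v i := by rw [dotProduct_mulVec, ← mulVec_transpose, hM]
      _ = μ * (u ⬝ᵥ v i) := by rw [hu, smul_dotProduct, smul_eq_mul]
  by_contra hu'
  exact hne i (mul_right_cancel₀ hu' h)

lemma Matrix.exists_complex_eigenvector_of_mem_spectrum [DecidableEq n] {M : Matrix n n ℝ}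
    {μ : ℝ} (hμ : μ ∈ spectrum ℝ M) :
    ∃ u : n → ℂ, u ≠ 0 ∧ M.map (↑) *ᵥ u = (μ : ℂ) • u := by
  rw [spectrum.mem_iff, isUnit_iff_isUnit_det, isUnit_iff_ne_zero, not_not] at hμ
  obtain ⟨u, hu0, hu⟩ := exists_mulVec_eq_zero_iff.mpr hμ
  rw [sub_mulVec, Algebra.algebraMap_eq_smul_one, smul_mulVec, one_mulVec, sub_eq_zero] at hu
  refine ⟨(↑) ∘ u, fun h => hu0 (funext fun i => by simpa using congrFun h i), funext fun i => ?_⟩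
  have hi := (RingHom.map_mulVec Complex.ofRealHom M u i).symm
  rw [← hu, Pi.smul_apply, smul_eq_mul, Complex.ofRealHom_eq_coe, Complex.ofReal_mul] at hi
  exact hi

lemma isIntegralGraph_of_eigenvectors {V ι : Type*} [Fintype V] (Γ : SimpleGraph V)
    {v : ι → V → ℂ} {θ : ι → ℤ} (hv : ∀ i, Γ.adjMatrix ℂ *ᵥ v i = (θ i : ℂ) • v i)
    (hspan : ∀ u, (∀ i, u ⬝ᵥ v i = 0) → u = 0) : IsIntegralGraph Γ := by
  intro μ hμ
  obtain ⟨u, hu0, hu⟩ := exists_complex_eigenvector_of_mem_spectrum hμ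
  have hmap : (Γ.adjMatrix ℝ).map ((↑) : ℝ → ℂ) = Γ.adjMatrix ℂ := by
    ext g h
    by_cases hgh : Γ.Adj g h <;> simp [hgh]
  rw [hmap] at hu
  obtain ⟨i, hi⟩ := exists_eigenvalue_eq_of_symm Γ.transpose_adjMatrix hv hspan hu0 hu
  exact ⟨θ i, by exact_mod_cast hi⟩

end Spectrum

namespace Dic

open Finset Matrix

variable {A : Type*} [CommGroup A] {y : A} {hy : y * y = 1}

def mapMulEquiv (σ : A ≃* A) (hσ : σ y = y) : Dic A y hy ≃* Dic A y hy where
  toFun g := ⟨g.t, σ g.a⟩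
  invFun g := ⟨g.t, σ.symm g.a⟩
  left_inv g := by simp
  right_inv g := by simp
  map_mul' := by
    rintro ⟨_ | _, a⟩ ⟨_ | _, b⟩ <;> ext <;> simp [hσ]

noncomputable def powMulEquiv {k : ℕ} (hk : (Nat.card A).Coprime k) : Dic A y hy ≃* Dic A y hy :=
  mapMulEquiv (.ofBijective (powMonoidHom k) hk.pow_left_bijective) (pow_eq_self_of_coprime hy hk)

@[simp] lemma x_mul_mk_false (a : A) : x A y hy * ⟨false, a⟩ = ⟨true, a⟩ := by
  ext <;> simp [x]

def slice (T : Set (Dic A y hy)) (t : Bool) : Set A := {a | ⟨t, a⟩ ∈ T}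

lemma eq_image_ofA_union_slice (T : Set (Dic A y hy)) :
    T = ofA '' slice T false ∪ (fun a => x A y hy * ofA a) '' slice T true := by
  ext ⟨t, a⟩
  cases t <;> simp [slice, ofA]

lemma slice_image_ofA_union (U₀ U₁ : Set A) (t : Bool) :
    slice (ofA '' U₀ ∪ (fun a => x A y hy * ofA a) '' U₁) t = cond t U₁ U₀ := by
  ext a
  cases t <;> simp [slice, ofA]

lemma powMulEquiv_mem_iff {T : Set (Dic A y hy)} (hT : ∀ t, ZPowersSaturated (slice T t))
    {k : ℕ} (hk : (Nat.card A).Coprime k) (g : Dic A y hy) : powMulEquiv hk g ∈ T ↔ g ∈ T :=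
  (hT g.t).pow_mem_iff hk

lemma zpowersSaturated_slice [Finite A] {T : Set (Dic A y hy)}
    (hT : ∀ k (hk : (Nat.card A).Coprime k) g, powMulEquiv (hy := hy) hk g ∈ T ↔ g ∈ T)
    (t : Bool) : ZPowersSaturated (slice T t) := by
  intro a b hab ha
  obtain ⟨k, hk, rfl⟩ := exists_coprime_pow_eq_of_zpowers_eq hab
  exact (hT k hk ⟨t, a⟩).mpr ha

lemma mul_mem_slice_true_iff {T : Set (Dic A y hy)} (hT : T⁻¹ = T) {b : A} :
    b * y ∈ slice T true ↔ b ∈ slice T true := by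
  -- `(x b)⁻¹ = x (y b)`
  conv_rhs => rw [slice, ← hT]
  rw [mul_comm]
  rfl

noncomputable def charVec (π : A →* ℂ) (ε : ℤˣ) (g : Dic A y hy) : ℂ :=
  if g.t then ε * π g.a⁻¹ else π g.a

lemma charVec_mul_mk_false (π : A →* ℂ) (ε : ℤˣ) (g : Dic A y hy) (b : A) :
    charVec π ε (g * ⟨false, b⟩) = charVec π ε g * if g.t then π b⁻¹ else π b := by
  obtain ⟨_ | _, a⟩ := g
  · simp [charVec]
  · simp [charVec]
    ring

lemma charVec_mul_mk_true (π : A →* ℂ) (ε : ℤˣ) (g : Dic A y hy) (b : A) :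
    charVec π ε (g * ⟨true, b⟩) = ε * charVec π ε g * if g.t then π (b * y) else π b⁻¹ := by
  have hε : (ε : ℂ) * ε = 1 := by rw [← Int.cast_mul, ← Units.val_mul, Int.units_mul_self]; simp
  obtain ⟨_ | _, a⟩ := g
  · simp [charVec]
    ring
  · simp only [charVec, mul_t, mul_a, Bool.true_xor, Bool.not_true, Bool.false_eq_true,
      Bool.and_self, ite_true, ite_false, map_mul, map_inv]
    linear_combination -((π a)⁻¹ * π b * π y) * hε

variable [Fintype A]

lemma sum_univ {M : Type*} [AddCommMonoid M] (F : Dic A y hy → M) :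
    ∑ g, F g = ∑ a, F ⟨false, a⟩ + ∑ a, F ⟨true, a⟩ := by
  let e : Dic A y hy ≃ Bool × A := ⟨fun g => (g.t, g.a), fun p => ⟨p.1, p.2⟩, fun _ => rfl,
    fun _ => rfl⟩
  rw [Fintype.sum_equiv e F (fun p => F ⟨p.1, p.2⟩) fun _ => rfl, Fintype.sum_prod_type,
    Fintype.sum_bool, add_comm]

lemma sum_toFinset {M : Type*} [AddCommMonoid M] (T : Set (Dic A y hy)) (F : Dic A y hy → M) :
    ∑ g ∈ T.toFinset, F g = ∑ a ∈ (slice T false).toFinset, F ⟨false, a⟩ +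
      ∑ a ∈ (slice T true).toFinset, F ⟨true, a⟩ := by
  conv_lhs => rw [← Set.ofPred_mem_eq (s := T), Set.toFinset_ofPred, sum_filter]
  rw [sum_univ (fun g => if g ∈ T then F g else 0)]
  congr 1 <;> rw [← sum_filter] <;> congr 1 <;> ext <;>
    simp only [mem_filter, mem_univ, true_and, Set.mem_toFinset] <;> rfl

theorem adjMatrix_mulVec_charVec (π : A →* ℂ) (ε : ℤˣ) {T : Set (Dic A y hy)}
    (h1 : (1 : Dic A y hy) ∉ T) (hT : T⁻¹ = T) (hsat : ∀ t, ZPowersSaturated (slice T t)) :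
    (cayley T).adjMatrix ℂ *ᵥ charVec π ε =
      (∑ b ∈ (slice T false).toFinset, π b + ε * ∑ b ∈ (slice T true).toFinset, π b) •
        charVec π ε := by
  have hinv (t : Bool) : ∑ b ∈ (slice T t).toFinset, π b⁻¹ = ∑ b ∈ (slice T t).toFinset, π b :=
    sum_equiv (Equiv.inv A) (by simp [(hsat t).inv_mem_iff]) fun _ _ => rfl
  have hy' : ∑ b ∈ (slice T true).toFinset, π (b * y) = ∑ b ∈ (slice T true).toFinset, π b :=
    sum_equiv (Equiv.mulRight y) (by simp [mul_mem_slice_true_iff hT]) fun _ _ => rfl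
  funext g
  rw [cayley_adjMatrix_mulVec_apply h1 hT, sum_toFinset]
  simp only [charVec_mul_mk_false, charVec_mul_mk_true, ← mul_sum, Pi.smul_apply, smul_eq_mul]
  cases g.t
  · simp only [Bool.false_eq_true, ite_false, hinv]
    ring
  · simp only [ite_true, hinv, hy']
    ring

lemma eq_zero_of_forall_dotProduct_charVec {u : Dic A y hy → ℂ}
    (hu : ∀ (π : A →* ℂ) (ε : ℤˣ), u ⬝ᵥ charVec π ε = 0) : u = 0 := by
  have hsplit (π : A →* ℂ) (ε : ℤˣ) : u ⬝ᵥ charVec π ε =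
      (fun a => u ⟨false, a⟩) ⬝ᵥ π + ε * (fun a => u ⟨true, a⁻¹⟩) ⬝ᵥ π := by
    rw [dotProduct, sum_univ, dotProduct, dotProduct, mul_sum]
    congr 1
    exact Fintype.sum_equiv (Equiv.inv A) _ _ fun a => by simp [charVec, mul_left_comm]
  have hsum (π : A →* ℂ) := hu π 1
  have hdiff (π : A →* ℂ) := hu π (-1)
  simp only [hsplit, Units.val_one, Units.val_neg, Int.cast_one, Int.cast_neg, one_mul,
    neg_one_mul] at hsum hdiff
  have h₀ : (fun a => u ⟨false, a⟩) = 0 := eq_zero_of_forall_dotProduct_monoidHom_eq_zero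
    fun π => by linear_combination (hsum π + hdiff π) / 2
  have h₁ : (fun a => u ⟨true, a⁻¹⟩) = 0 := eq_zero_of_forall_dotProduct_monoidHom_eq_zero
    fun π => by linear_combination (hsum π - hdiff π) / 2
  funext ⟨t, a⟩
  cases t
  · exact congrFun h₀ a
  · simpa using congrFun h₁ a⁻¹

theorem isIntegralGraph_cayley {T : Set (Dic A y hy)} (h1 : (1 : Dic A y hy) ∉ T)
    (hT : T⁻¹ = T) (hsat : ∀ t, ZPowersSaturated (slice T t)) : IsIntegralGraph (cayley T) := by
  choose α hα using fun π => RingHom.mem_range.mp ((hsat false).sum_monoidHom_mem_range π)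
  choose β hβ using fun π => RingHom.mem_range.mp ((hsat true).sum_monoidHom_mem_range π)
  refine isIntegralGraph_of_eigenvectors (v := fun p : (A →* ℂ) × ℤˣ => charVec p.1 p.2)
    (θ := fun p => α p.1 + p.2 * β p.1) _ (fun p => ?_)
    fun u hu => eq_zero_of_forall_dotProduct_charVec fun π ε => hu (π, ε)
  rw [adjMatrix_mulVec_charVec _ _ h1 hT hsat, ← hα, ← hβ]
  push_cast
  rfl

end Dic

theorem dic_distance_power_integral_general {A : Type*} [CommGroup A] [Fintype A]
    (y : A) (hy : y * y = 1)
    (S : Set (Dic A y hy)) (S₁ S₂ : Set A)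
    (hS : S = Dic.ofA '' S₁ ∪ (fun a => Dic.x A y hy * Dic.ofA a) '' S₂)
    (hgen : Subgroup.closure S = ⊤)
    (D : Finset ℕ)
    (hS₁ : InBoolAlg A S₁) (hS₂ : InBoolAlg A S₂) :
    ∃ S₁D S₂D : Set A, ∃ SD : Set (Dic A y hy),
      SD = Dic.ofA '' S₁D ∪ (fun a => Dic.x A y hy * Dic.ofA a) '' S₂D ∧
      (1 : Dic A y hy) ∉ SD ∧
      SD⁻¹ = SD ∧
      distPower (cayley S) D = cayley SD ∧
      IsIntegralGraph (distPower (cayley S) D) ∧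
      S₂D⁻¹ = S₂D ∧
      (1 ∈ D → (distPower (cayley S) D).Connected) := by
  set Γ := distPower (cayley S) D
  have hΓ : ∀ k g h, Γ.Adj (k * g) (k * h) ↔ Γ.Adj g h := fun k _ _ =>
    ((cayleyMulLeft S k).distPower D).map_adj_iff
  have hSsat : ∀ t, ZPowersSaturated (Dic.slice S t) := by
    intro t
    rw [hS, Dic.slice_image_ofA_union]
    cases t
    exacts [hS₁.zpowersSaturated, hS₂.zpowersSaturated]
  have hSDsat : ∀ t, ZPowersSaturated (Dic.slice {g | Γ.Adj 1 g} t) :=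
    Dic.zpowersSaturated_slice fun k hk g => by
      simpa using ((cayleyMulEquiv _ (Dic.powMulEquiv_mem_iff hSsat hk)).distPower D).map_adj_iff
        (v := 1) (w := g)
  have hΓ_eq : cayley {g | Γ.Adj 1 g} = Γ := cayley_setOf_adj_one hΓ
  refine ⟨_, _, _, Dic.eq_image_ofA_union_slice _, Γ.irrefl, inv_setOf_adj_one hΓ, hΓ_eq.symm,
    ?_, Set.ext fun _ => (hSDsat true).inv_mem_iff,
    fun h1 => (cayley_connected hgen).mono (SimpleGraph.le_distPower h1)⟩
  rw [← hΓ_eq]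
  exact Dic.isIntegralGraph_cayley Γ.irrefl (inv_setOf_adj_one hΓ) hSDsat

/-- Theorem 4.1: if `S = S₁ ∪ xS₂` generates `Dic(A,y)`, `1 ∉ S`, `S⁻¹ = S`
and `S₁, S₂ ∈ B(A)`, then for every non-empty finite set `D` of positive integers the distance
power `Cay(Dic(A,y), S)^D` is a Cayley graph `Cay(Dic(A,y), S^D)` with `S^D = S₁^D ∪ xS₂^D`,
`1 ∉ S^D`, `(S^D)⁻¹ = S^D`; it is integral, `(S₂^D)⁻¹ = S₂^D`, and it is connected if `1 ∈ D`. -/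
theorem dic_distance_power_integral {A : Type*} [CommGroup A] [Fintype A]
    (hA : Even (Fintype.card A)) (hexp : 3 ≤ Monoid.exponent A)
    (y : A) (hy : y * y = 1) (hy1 : y ≠ 1)
    (S : Set (Dic A y hy)) (S₁ S₂ : Set A)
    (hS : S = Dic.ofA '' S₁ ∪ (fun a => Dic.x A y hy * Dic.ofA a) '' S₂)
    (h1S : (1 : Dic A y hy) ∉ S) (hSinv : S⁻¹ = S)
    (hgen : Subgroup.closure S = ⊤)
    (D : Finset ℕ) (hD : D.Nonempty) (hDpos : ∀ d ∈ D, 0 < d)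
    (hS₁ : InBoolAlg A S₁) (hS₂ : InBoolAlg A S₂) :
    ∃ S₁D S₂D : Set A, ∃ SD : Set (Dic A y hy),
      SD = Dic.ofA '' S₁D ∪ (fun a => Dic.x A y hy * Dic.ofA a) '' S₂D ∧
      (1 : Dic A y hy) ∉ SD ∧
      SD⁻¹ = SD ∧
      distPower (cayley S) D = cayley SD ∧
      IsIntegralGraph (distPower (cayley S) D) ∧
      S₂D⁻¹ = S₂D ∧
      (1 ∈ D → (distPower (cayley S) D).Connected) :=
  dic_distance_power_integral_general y hy S S₁ S₂ hS hgen D hS₁ hS₂
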